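/- Fix m ≥ 1, 0 ≤ α < n, and 0 < ε < 1. Suppose J ⊂ I ⊂ K are cubes in ℝⁿ with dist(J, ∂I) > 2√n · ℓ(J)^ε · ℓ(I)^{1-ε}. Then for any locally finite positive Borel measure σ, P^α_m(J, σ·1_{K∖I}) ≤ C (ℓ(J)/ℓ(I))^{m - ε(n+m-α)} · P^α_m(I, σ·1_{K∖I}), with constant C depending only on n, m, α, ε. -/

import Mathlib

open MeasureTheory ENNReal

noncomputable section

/-- The axis-parallel cube in `ℝⁿ` with center `c` and side length `l`. -/
def Cube (n : ℕ) (c : Fin n → ℝ) (l : ℝ) : Set (Fin n → ℝ) :=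
  {x | ∀ i, |x i - c i| ≤ l / 2}

/-- The `m`-th order fractional Poisson integral
`P^α_m(Q,μ) = ∫ ℓ(Q)^m / (ℓ(Q) + |y - c_Q|)^(n+m-α) dμ(y)` of the cube with
center `c` and side length `l`. -/
def PoissonInt (n : ℕ) (α : ℝ) (m : ℕ) (c : Fin n → ℝ) (l : ℝ)
    (μ : Measure (Fin n → ℝ)) : ℝ≥0∞ :=
  ∫⁻ y, ENNReal.ofReal (l ^ m / (l + ‖y - c‖) ^ ((n : ℝ) + m - α)) ∂μ

/-! Far from `J`, the kernel of `J` is dominated by that of `I`: if `y ∉ I`, then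
`t = |y - c_J|` exceeds twice the geometric mean `X = ℓ(J)^ε ℓ(I)^(1-ε)`, while
`ℓ(I) = (ℓ(I)/ℓ(J))^ε X`, so `ℓ(I) + |y - c_I| ≤ 3 (ℓ(I)/ℓ(J))^ε (ℓ(J) + t)`. Raising this to
the power `n + m - α` and integrating against `σ 1_{K∖I}` gives the bound with `C = 3^(n+m-α)`. -/

theorem IsPreconnected.inter_frontier_nonempty {X : Type*} [TopologicalSpace X]
    {s t : Set X} (hs : IsPreconnected s) (hst : (s ∩ t).Nonempty) (hst' : (s \ t).Nonempty) :
    (s ∩ frontier t).Nonempty := by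
  by_contra h
  have hint : ∀ z ∈ s, z ∈ closure t → z ∈ interior t := fun z hzs hzt => by
    by_contra hzi
    exact h ⟨z, hzs, hzt, hzi⟩
  obtain ⟨x, hxs, hxt⟩ := hst
  have hsub : s ⊆ interior t :=
    hs.subset_of_closure_inter_subset isOpen_interior
      ⟨x, hxs, hint x hxs (subset_closure hxt)⟩
      fun z ⟨hzt, hzs⟩ => hint z hzs (closure_mono interior_subset hzt)
  obtain ⟨y, hys, hyt⟩ := hst'
  exact hyt (interior_subset (hsub hys))

theorem lt_dist_of_forall_frontier_lt_dist {E : Type*} [NormedAddCommGroup E]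
    [NormedSpace ℝ E] {s : Set E} {x y : E} {d : ℝ} (hx : x ∈ s) (hy : y ∉ s)
    (h : ∀ z ∈ frontier s, d < dist x z) : d < dist x y := by
  obtain ⟨z, hzxy, hzs⟩ := (convex_segment x y).isPreconnected.inter_frontier_nonempty
    ⟨x, left_mem_segment ℝ x y, hx⟩ ⟨y, right_mem_segment ℝ x y, hy⟩
  calc d < dist x z := h z hzs
    _ ≤ dist x y := by
      linarith [dist_add_dist_of_mem_segment hzxy, dist_nonneg (x := z) (y := y)]

section Cube

variable {n : ℕ} {c : Fin n → ℝ} {l : ℝ}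

theorem cube_eq_closedBall (hl : 0 ≤ l) : Cube n c l = Metric.closedBall c (l / 2) := by
  ext x
  simp only [Cube, Set.mem_ofPred_eq, Metric.mem_closedBall,
    dist_pi_le_iff (by linarith : 0 ≤ l / 2), Real.dist_eq]

theorem isClosed_cube (n : ℕ) (c : Fin n → ℝ) (l : ℝ) : IsClosed (Cube n c l) := by
  simp only [Cube, Set.ofPred_forall]
  exact isClosed_iInter fun i => isClosed_le (by fun_prop) continuous_const

theorem center_mem_cube (hl : 0 ≤ l) : c ∈ Cube n c l := by
  rw [cube_eq_closedBall hl]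
  exact Metric.mem_closedBall_self (by positivity)

theorem norm_sub_le_of_mem_cube {x : Fin n → ℝ} (hl : 0 ≤ l) (hx : x ∈ Cube n c l) :
    ‖x - c‖ ≤ l / 2 := by
  rwa [cube_eq_closedBall hl, Metric.mem_closedBall, dist_eq_norm] at hx

theorem le_of_cube_subset_cube (hn : 0 < n) {c' : Fin n → ℝ} {l' : ℝ} (hl : 0 ≤ l) (hl' : 0 ≤ l')
    (h : Cube n c l ⊆ Cube n c' l') : l ≤ l' := by
  have : NeZero n := ⟨hn.ne'⟩
  rw [cube_eq_closedBall hl, cube_eq_closedBall hl'] at h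
  have := Metric.diam_mono h Metric.isBounded_closedBall
  rw [Metric.diam_closedBall_eq _ (by positivity), Metric.diam_closedBall_eq _ (by positivity)]
    at this
  linarith

end Cube

theorem rpow_div_mul_geomMean_eq {a b : ℝ} (ha : 0 < a) (hb : 0 < b) (ε : ℝ) :
    (b / a) ^ ε * (a ^ ε * b ^ (1 - ε)) = b := by
  rw [Real.div_rpow hb.le ha.le, div_mul_eq_mul_div, mul_left_comm,
    mul_div_cancel_left₀ _ (Real.rpow_pos_of_pos ha ε).ne',
    ← Real.rpow_add hb, add_sub_cancel, Real.rpow_one]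

theorem add_le_three_mul_of_two_geomMean_le {a b t s ε : ℝ} (ha : 0 < a) (hab : a ≤ b)
    (hε : 0 ≤ ε) (hs : s ≤ t + b / 2) (ht : 2 * (a ^ ε * b ^ (1 - ε)) ≤ t) :
    b + s ≤ 3 * ((b / a) ^ ε * (a + t)) := by
  have hQ : 1 ≤ (b / a) ^ ε := Real.one_le_rpow ((one_le_div ha).mpr hab) hε
  have hX : 0 < a ^ ε * b ^ (1 - ε) := by positivity [ha.trans_le hab]
  have hb : 2 * b ≤ (b / a) ^ ε * t := by
    calc 2 * b = (b / a) ^ ε * (2 * (a ^ ε * b ^ (1 - ε))) := by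
          rw [mul_left_comm, rpow_div_mul_geomMean_eq ha (ha.trans_le hab) ε]
      _ ≤ (b / a) ^ ε * t := by gcongr
  nlinarith [mul_le_mul_of_nonneg_right hQ (by linarith : 0 ≤ t),
    mul_nonneg (by linarith : (0 : ℝ) ≤ (b / a) ^ ε) ha.le]

theorem poissonKernel_le_of_two_geomMean_le {a b t s ε p : ℝ} (m : ℕ) (ha : 0 < a)
    (hab : a ≤ b) (hε : 0 ≤ ε) (hp : 0 ≤ p) (hs0 : 0 ≤ s) (hs : s ≤ t + b / 2)
    (ht : 2 * (a ^ ε * b ^ (1 - ε)) ≤ t) :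
    a ^ m / (a + t) ^ p ≤ 3 ^ p * (a / b) ^ ((m : ℝ) - ε * p) * (b ^ m / (b + s) ^ p) := by
  have hb : 0 < b := ha.trans_le hab
  have hat : 0 < a + t := by
    have : 0 < a ^ ε * b ^ (1 - ε) := by positivity
    linarith
  have hpow : (b + s) ^ p ≤ 3 ^ p * ((b / a) ^ (ε * p) * (a + t) ^ p) := by
    calc (b + s) ^ p ≤ (3 * ((b / a) ^ ε * (a + t))) ^ p :=
          Real.rpow_le_rpow (by positivity) (add_le_three_mul_of_two_geomMean_le ha hab hε hs ht) hp
      _ = 3 ^ p * ((b / a) ^ (ε * p) * (a + t) ^ p) := by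
          rw [Real.mul_rpow (by norm_num) (by positivity), Real.mul_rpow (by positivity) hat.le,
            Real.rpow_mul (by positivity)]
  have hsplit : (a / b) ^ ((m : ℝ) - ε * p) * b ^ m = (b / a) ^ (ε * p) * a ^ m := by
    rw [Real.rpow_sub (by positivity), Real.rpow_natCast, ← inv_div b a,
      Real.inv_rpow (by positivity)]
    field_simp
    rw [div_pow, div_mul_cancel₀ _ (pow_ne_zero m hb.ne')]
  have hrhs : 3 ^ p * (a / b) ^ ((m : ℝ) - ε * p) * (b ^ m / (b + s) ^ p)
      = 3 ^ p * ((b / a) ^ (ε * p) * a ^ m) / (b + s) ^ p := by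
    rw [← hsplit]; ring
  rw [hrhs, div_le_div_iff₀ (by positivity) (by positivity)]
  calc a ^ m * (b + s) ^ p ≤ a ^ m * (3 ^ p * ((b / a) ^ (ε * p) * (a + t) ^ p)) := by gcongr
    _ = 3 ^ p * ((b / a) ^ (ε * p) * a ^ m) * (a + t) ^ p := by ring

theorem poissonInt_le_ofReal_mul {n m : ℕ} {α r : ℝ} {cJ cI : Fin n → ℝ} {lJ lI : ℝ}
    {μ : Measure (Fin n → ℝ)} (hr : 0 ≤ r)
    (h : ∀ᵐ y ∂μ, lJ ^ m / (lJ + ‖y - cJ‖) ^ ((n : ℝ) + m - α) ≤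
      r * (lI ^ m / (lI + ‖y - cI‖) ^ ((n : ℝ) + m - α))) :
    PoissonInt n α m cJ lJ μ ≤ ENNReal.ofReal r * PoissonInt n α m cI lI μ := by
  unfold PoissonInt
  rw [← lintegral_const_mul' _ _ ENNReal.ofReal_ne_top]
  refine lintegral_mono_ae (h.mono fun y hy => ?_)
  rw [← ENNReal.ofReal_mul hr]
  exact ENNReal.ofReal_le_ofReal hy

theorem poisson_decay_good_cubes_general (n m : ℕ) (α ε : ℝ) (hn : 0 < n)
    (hαn : α < n) (hε0 : 0 < ε) :
    ∃ C : ℝ, 0 < C ∧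
      ∀ (σ : Measure (Fin n → ℝ)), IsLocallyFiniteMeasure σ →
      ∀ (cJ cI cK : Fin n → ℝ) (lJ lI lK : ℝ),
        0 < lJ → 0 < lI → 0 < lK →
        Cube n cJ lJ ⊆ Cube n cI lI → Cube n cI lI ⊆ Cube n cK lK →
        (∀ x ∈ Cube n cJ lJ, ∀ y ∈ frontier (Cube n cI lI),
          2 * Real.sqrt n * lJ ^ ε * lI ^ (1 - ε) < dist x y) →
        PoissonInt n α m cJ lJ (σ.restrict (Cube n cK lK \ Cube n cI lI)) ≤
          ENNReal.ofReal (C * (lJ / lI) ^ ((m : ℝ) - ε * ((n : ℝ) + m - α))) *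
            PoissonInt n α m cI lI (σ.restrict (Cube n cK lK \ Cube n cI lI)) := by
  have hp : 0 ≤ (n : ℝ) + m - α := by linarith [(m.cast_nonneg : (0 : ℝ) ≤ m)]
  have hsqrt : 1 ≤ Real.sqrt n := Real.one_le_sqrt.mpr (by exact_mod_cast hn)
  refine ⟨3 ^ ((n : ℝ) + m - α), by positivity,
    fun σ _ cJ cI cK lJ lI lK hlJ hlI _ hJI _ hdist => ?_⟩
  have hcJ : cJ ∈ Cube n cJ lJ := center_mem_cube hlJ.le
  have hfar (y : Fin n → ℝ) (hy : y ∉ Cube n cI lI) :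
      2 * (lJ ^ ε * lI ^ (1 - ε)) ≤ ‖y - cJ‖ := by
    have hd := lt_dist_of_forall_frontier_lt_dist (hJI hcJ) hy (hdist cJ hcJ)
    rw [dist_comm, dist_eq_norm] at hd
    have : 0 < lJ ^ ε * lI ^ (1 - ε) := by positivity
    nlinarith
  refine poissonInt_le_ofReal_mul (by positivity) (ae_restrict_of_forall_mem
    ((isClosed_cube n cK lK).measurableSet.diff (isClosed_cube n cI lI).measurableSet)
    fun y hy => ?_)
  exact poissonKernel_le_of_two_geomMean_le m hlJ (le_of_cube_subset_cube hn hlJ.le hlI.le hJI)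
    hε0.le hp (norm_nonneg _)
    ((norm_sub_le_norm_sub_add_norm_sub y cJ cI).trans
      (add_le_add_right (norm_sub_le_of_mem_cube hlI.le (hJI hcJ)) _))
    (hfar y hy.2)

/-- If `J ⊂ I ⊂ K` with `dist(J, ∂I) > 2√n ℓ(J)^ε ℓ(I)^(1-ε)`, then
`P^α_m(J, σ 1_{K∖I}) ≲ (ℓ(J)/ℓ(I))^(m - ε(n+m-α)) P^α_m(I, σ 1_{K∖I})`. -/
theorem poisson_decay_good_cubes (n m : ℕ) (α ε : ℝ) (hn : 0 < n) (hm : 1 ≤ m)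
    (hα0 : 0 ≤ α) (hαn : α < n) (hε0 : 0 < ε) (hε1 : ε < 1) :
    ∃ C : ℝ, 0 < C ∧
      ∀ (σ : Measure (Fin n → ℝ)), IsLocallyFiniteMeasure σ →
      ∀ (cJ cI cK : Fin n → ℝ) (lJ lI lK : ℝ),
        0 < lJ → 0 < lI → 0 < lK →
        Cube n cJ lJ ⊆ Cube n cI lI → Cube n cI lI ⊆ Cube n cK lK →
        (∀ x ∈ Cube n cJ lJ, ∀ y ∈ frontier (Cube n cI lI),
          2 * Real.sqrt n * lJ ^ ε * lI ^ (1 - ε) < dist x y) →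
        PoissonInt n α m cJ lJ (σ.restrict (Cube n cK lK \ Cube n cI lI)) ≤
          ENNReal.ofReal (C * (lJ / lI) ^ ((m : ℝ) - ε * ((n : ℝ) + m - α))) *
            PoissonInt n α m cI lI (σ.restrict (Cube n cK lK \ Cube n cI lI)) :=
  poisson_decay_good_cubes_general n m α ε hn hαn hε0
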